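/- arXiv:2011.03698 — 3 statements merged into one kernel-verified Lean document; each statement's English description precedes it below -/
import Mathlib

section
/- Suppose a user moves linearly with constant step length d > 0 starting at (q₁, u₁), so that the position at step n is (q₁ + (n−1)d, u₁), and the ranging measurement satisfies rₙ = ‖(q₁ + (n−1)d, u₁)‖ + b. Then for any three distinct indices n, a₁, a₂, the identity d²(a₁ − a₂) + 2b·((rₙ − r_{a₁})/(n − a₁) − (rₙ − r_{a₂})/(n − a₂)) = (rₙ² − r_{a₁}²)/(n − a₁) − (rₙ² − r_{a₂}²)/(n − a₂) holds. -/
/-!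
With `ρₖ = rₖ - b` the true range, `rₖ² - 2b·rₖ = ρₖ² - b²`, and `ρₖ²` is a quadratic polynomial
in `k` with leading coefficient `d²`. After moving the `2b`-terms across, the identity says that
two divided differences of this quadratic sharing the node `n` differ by `d²(a₁ - a₂)`.
-/

lemma sq_sub_two_mul_eq_of_eq_sqrt_add {r s b : ℝ} (hs : 0 ≤ s) (h : r = Real.sqrt s + b) :
    r ^ 2 - 2 * b * r = s - b ^ 2 := by
  have hsq : Real.sqrt s ^ 2 = s := Real.sq_sqrt hs
  rw [h]
  linear_combination hsq

lemma div_sub_div_of_quadratic {f : ℝ → ℝ} {A B C n a₁ a₂ : ℝ}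
    (hf : ∀ x, f x = A * x ^ 2 + B * x + C) (h₁ : n - a₁ ≠ 0) (h₂ : n - a₂ ≠ 0) :
    (f n - f a₁) / (n - a₁) - (f n - f a₂) / (n - a₂) = A * (a₁ - a₂) := by
  simp only [hf]
  field_simp
  ring

theorem linear_soe_identity_general (q₁ u₁ d b : ℝ) (r : ℕ → ℝ)
    (hr : ∀ k : ℕ, r k = Real.sqrt ((q₁ + ((k : ℝ) - 1) * d) ^ 2 + u₁ ^ 2) + b)
    (n a₁ a₂ : ℕ)
    (hna₁ : n ≠ a₁) (hna₂ : n ≠ a₂) :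
    d ^ 2 * ((a₁ : ℝ) - a₂) +
      2 * b * ((r n - r a₁) / ((n : ℝ) - a₁) - (r n - r a₂) / ((n : ℝ) - a₂)) =
    (r n ^ 2 - r a₁ ^ 2) / ((n : ℝ) - a₁) - (r n ^ 2 - r a₂ ^ 2) / ((n : ℝ) - a₂) := by
  set f : ℝ → ℝ := fun x ↦ (q₁ + (x - 1) * d) ^ 2 + u₁ ^ 2 - b ^ 2
  have hf : ∀ x, f x = d ^ 2 * x ^ 2 + 2 * d * (q₁ - d) * x + ((q₁ - d) ^ 2 + u₁ ^ 2 - b ^ 2) :=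
    fun x ↦ by ring
  have hrf : ∀ k : ℕ, r k ^ 2 - 2 * b * r k = f k :=
    fun k ↦ sq_sub_two_mul_eq_of_eq_sqrt_add (by positivity) (hr k)
  have hA : (n : ℝ) - a₁ ≠ 0 := sub_ne_zero.mpr (by exact_mod_cast hna₁)
  have hB : (n : ℝ) - a₂ ≠ 0 := sub_ne_zero.mpr (by exact_mod_cast hna₂)
  have key := div_sub_div_of_quadratic hf hA hB
  rw [← hrf, ← hrf, ← hrf] at key
  rw [← key]
  ring

theorem linear_soe_identity (q₁ u₁ d b : ℝ) (r : ℕ → ℝ)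
    (hr : ∀ k : ℕ, r k = Real.sqrt ((q₁ + ((k : ℝ) - 1) * d) ^ 2 + u₁ ^ 2) + b)
    (n a₁ a₂ : ℕ) (hn : 1 ≤ n) (ha₁ : 1 ≤ a₁) (ha₂ : 1 ≤ a₂)
    (hna₁ : n ≠ a₁) (hna₂ : n ≠ a₂) (ha : a₁ ≠ a₂) :
    d ^ 2 * ((a₁ : ℝ) - a₂) +
      2 * b * ((r n - r a₁) / ((n : ℝ) - a₁) - (r n - r a₂) / ((n : ℝ) - a₂)) =
    (r n ^ 2 - r a₁ ^ 2) / ((n : ℝ) - a₁) - (r n ^ 2 - r a₂ ^ 2) / ((n : ℝ) - a₂) :=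
  linear_soe_identity_general q₁ u₁ d b r hr n a₁ a₂ hna₁ hna₂
end

section
/- Let two APs be at distinct positions p₁ ≠ p₂ and suppose the relative trajectories satisfy z⁽¹⁾ₙ − z⁽²⁾ₙ = c (constant vector) with ‖c‖ = ‖p₂ − p₁‖ > 0. Then there exists a unique ω* ∈ [0, 2π) such that Θ(−ω*)(p₂ − p₁) = c, and for that ω* the globally rotated trajectories coincide: p₁ + Θ(ω*)z⁽¹⁾ₙ = p₂ + Θ(ω*)z⁽²⁾ₙ for all n. -/
noncomputable def rotMat (ω : ℝ) : Matrix (Fin 2) (Fin 2) ℝ :=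
  !![Real.cos ω, -Real.sin ω; Real.sin ω, Real.cos ω]

/-!
Identify `ℝ²` with `ℂ`, so that `rotMat ω` becomes multiplication by `exp (ω i)`. Since
`z⁽¹⁾ₙ - z⁽²⁾ₙ = c`, both conditions on `ω` say `exp (ω i) c = p₂ - p₁`, i.e.
`exp (ω i) = (p₂ - p₁) / c`, a point of the unit circle because `‖c‖ = ‖p₂ - p₁‖ ≠ 0`; and
`ω ↦ exp (ω i)` is a bijection from `[0, 2π)` onto the unit circle.
-/

open Complex Set Matrix
open scoped Real

theorem Circle.existsUnique_exp_eq (u : Circle) : ∃! ω ∈ Ico 0 (2 * π), exp ω = u := by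
  refine ⟨angleDiff 1 u, ⟨⟨angleDiff_nonneg 1 u, angleDiff_lt_two_pi 1 u⟩, ?_⟩, ?_⟩
  · simpa using exp_angleDiff_mul (x := 1) (y := u)
  · rintro ω ⟨hω, rfl⟩
    exact exp_injOn_Ico (by simp) hω ⟨angleDiff_nonneg 1 _, angleDiff_lt_two_pi 1 _⟩
      (by simpa using (exp_angleDiff_mul (x := 1) (y := exp ω)).symm)

theorem Complex.existsUnique_exp_mul_I_mul_eq {z w : ℂ} (hw : w ≠ 0) (h : ‖z‖ = ‖w‖) :
    ∃! ω ∈ Ico 0 (2 * π), exp (ω * I) * z = w := by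
  have hz : z ≠ 0 := norm_ne_zero_iff.mp (h ▸ norm_ne_zero_iff.mpr hw)
  let u : Circle := ⟨w / z, by simp [Submonoid.unitSphere, h, hw]⟩
  refine (existsUnique_congr fun ω => and_congr_right fun _ => ?_).mp (Circle.existsUnique_exp_eq u)
  rw [Circle.ext_iff, Circle.coe_exp, eq_div_iff hz]

noncomputable def toComplex : (Fin 2 → ℝ) ≃ₗ[ℝ] ℂ := basisOneI.equivFun.symm

@[simp]
theorem toComplex_re (v : Fin 2 → ℝ) : (toComplex v).re = v 0 := by
  simp [toComplex, Fin.sum_univ_two]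

@[simp]
theorem toComplex_im (v : Fin 2 → ℝ) : (toComplex v).im = v 1 := by
  simp [toComplex, Fin.sum_univ_two]

theorem norm_toComplex (v : Fin 2 → ℝ) :
    ‖toComplex v‖ = ‖(WithLp.equiv 2 (Fin 2 → ℝ)).symm v‖ := by
  rw [EuclideanSpace.norm_eq, norm_eq_sqrt_sq_add_sq]
  simp [Fin.sum_univ_two]

theorem toComplex_rotMat_mulVec (ω : ℝ) (v : Fin 2 → ℝ) :
    toComplex (rotMat ω *ᵥ v) = exp (ω * I) * toComplex v := by
  apply Complex.ext <;>
    simp [rotMat, dotProduct, Fin.sum_univ_two, exp_mul_I, ← ofReal_cos, ← ofReal_sin] <;> ring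

theorem rotMat_neg_mulVec_eq_iff (ω : ℝ) (v w : Fin 2 → ℝ) :
    rotMat (-ω) *ᵥ v = w ↔ rotMat ω *ᵥ w = v := by
  rw [← toComplex.injective.eq_iff, ← toComplex.injective.eq_iff, toComplex_rotMat_mulVec,
    toComplex_rotMat_mulVec, ofReal_neg, neg_mul, exp_neg, inv_mul_eq_iff_eq_mul₀ (exp_ne_zero _),
    eq_comm]

theorem Matrix.add_mulVec_eq_add_mulVec_iff {m n R : Type*} [Fintype n] [Ring R]
    (A : Matrix m n R) (p q : m → R) (x y : n → R) :
    p + A *ᵥ x = q + A *ᵥ y ↔ A *ᵥ (x - y) = q - p := by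
  rw [mulVec_sub, sub_eq_sub_iff_add_eq_add, add_comm, eq_comm]

theorem trajectory_alignment_unique (p₁ p₂ : Fin 2 → ℝ) (hp : p₁ ≠ p₂)
    (c : Fin 2 → ℝ)
    (hc : ‖(WithLp.equiv 2 (Fin 2 → ℝ)).symm c‖ =
      ‖(WithLp.equiv 2 (Fin 2 → ℝ)).symm (p₂ - p₁)‖)
    (z₁ z₂ : ℕ → Fin 2 → ℝ) (hz : ∀ n, z₁ n - z₂ n = c) :
    ∃! ω : ℝ, ω ∈ Set.Ico 0 (2 * Real.pi) ∧
      (rotMat (-ω)).mulVec (p₂ - p₁) = c ∧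
      ∀ n, p₁ + (rotMat ω).mulVec (z₁ n) = p₂ + (rotMat ω).mulVec (z₂ n) := by
  have hd : toComplex (p₂ - p₁) ≠ 0 := by simpa [sub_eq_zero] using hp.symm
  have hnorm : ‖toComplex c‖ = ‖toComplex (p₂ - p₁)‖ := by simpa only [norm_toComplex] using hc
  refine (existsUnique_congr fun ω => and_congr_right fun _ => ?_).mp
    (existsUnique_exp_mul_I_mul_eq hd hnorm)
  rw [rotMat_neg_mulVec_eq_iff, ← toComplex_rotMat_mulVec, toComplex.injective.eq_iff]
  simp only [add_mulVec_eq_add_mulVec_iff, hz, forall_const, and_self]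
end

section
/- Under the same hypothesis f_{a₁,a₂}(γ̂) = 0, the coefficient βₙ(γ̂) := 2(f_{n,a₂}(γ̂)(rₙ − r_{a₁}) − f_{n,a₁}(γ̂)(rₙ − r_{a₂})) equals 2·f_{n,a₁}(γ̂)·(r_{a₂} − r_{a₁}) for every n; consequently every row (αₙ(γ̂), βₙ(γ̂)) is a scalar multiple of the fixed row (η_{a₂,a₁}, 2(r_{a₂} − r_{a₁})), so the matrix A(S, γ̂) has rank at most 1. -/
noncomputable def fFun (θ : ℕ → ℝ) (n a : ℕ) (γ : ℝ) : ℝ :=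
  (∑ i ∈ Finset.Ico 1 n, Real.cos (θ i - γ)) - ∑ i ∈ Finset.Ico 1 a, Real.cos (θ i - γ)

noncomputable def cSum (θ : ℕ → ℝ) (n : ℕ) : ℝ := ∑ j ∈ Finset.Ico 1 n, Real.cos (θ j)

noncomputable def sSum (θ : ℕ → ℝ) (n : ℕ) : ℝ := ∑ j ∈ Finset.Ico 1 n, Real.sin (θ j)

noncomputable def etaFun (θ : ℕ → ℝ) (n a : ℕ) : ℝ :=
  (cSum θ n ^ 2 + sSum θ n ^ 2) - (cSum θ a ^ 2 + sSum θ a ^ 2)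

/-! Both `fFun` and `etaFun` are differences `F n - F a` of a single function of the index,
so they satisfy the cocycle identity `g n a = g n b + g b a`. Hence `f_{a₁,a₂}(γ̂) = 0` forces
`f_{n,a₁}(γ̂) = f_{n,a₂}(γ̂)`, and the row `(αₙ, βₙ)` collapses to `f_{n,a₁}(γ̂)` times
`(η_{a₂,a₁}, 2 (r_{a₂} - r_{a₁}))`. -/

theorem fFun_add_fFun (θ : ℕ → ℝ) (n b a : ℕ) (γ : ℝ) :
    fFun θ n b γ + fFun θ b a γ = fFun θ n a γ := by
  unfold fFun
  ring

theorem etaFun_add_etaFun (θ : ℕ → ℝ) (n b a : ℕ) :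
    etaFun θ n b + etaFun θ b a = etaFun θ n a := by
  unfold etaFun
  ring

theorem fFun_eq_of_fFun_eq_zero {θ : ℕ → ℝ} {a₁ a₂ : ℕ} {γ : ℝ} (hf : fFun θ a₁ a₂ γ = 0)
    (n : ℕ) : fFun θ n a₂ γ = fFun θ n a₁ γ := by
  rw [← fFun_add_fFun θ n a₁ a₂, hf, add_zero]

theorem beta_changed_and_rank_one (θ : ℕ → ℝ) (r : ℕ → ℝ) (a₁ a₂ : ℕ) (γhat : ℝ)
    (hf : fFun θ a₁ a₂ γhat = 0) :
    (∀ n : ℕ,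
      2 * (fFun θ n a₂ γhat * (r n - r a₁) - fFun θ n a₁ γhat * (r n - r a₂)) =
        2 * fFun θ n a₁ γhat * (r a₂ - r a₁)) ∧
    (∀ n : ℕ, ∃ t : ℝ,
      (fFun θ n a₂ γhat * etaFun θ n a₁ - fFun θ n a₁ γhat * etaFun θ n a₂,
        2 * (fFun θ n a₂ γhat * (r n - r a₁) - fFun θ n a₁ γhat * (r n - r a₂))) =
      (t * etaFun θ a₂ a₁, t * (2 * (r a₂ - r a₁)))) := by
  have hbeta : ∀ n : ℕ,
      2 * (fFun θ n a₂ γhat * (r n - r a₁) - fFun θ n a₁ γhat * (r n - r a₂)) =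
        2 * fFun θ n a₁ γhat * (r a₂ - r a₁) := by
    intro n
    rw [fFun_eq_of_fFun_eq_zero hf n]
    ring
  refine ⟨hbeta, fun n => ⟨fFun θ n a₁ γhat, ?_⟩⟩
  have halpha : fFun θ n a₂ γhat * etaFun θ n a₁ - fFun θ n a₁ γhat * etaFun θ n a₂ =
      fFun θ n a₁ γhat * etaFun θ a₂ a₁ := by
    rw [fFun_eq_of_fFun_eq_zero hf n, ← etaFun_add_etaFun θ n a₂ a₁]
    ring
  rw [halpha, hbeta n]
  exact Prod.ext rfl (by ring)
end
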